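/- arXiv:2306.00619 — 2 statements merged into one kernel-verified Lean document; each statement's English description precedes it below -/
import Mathlib

section
/- Consider the higher-order SIWS model. Then: (i) every solution with z(0) ∈ D̄ satisfies z(t) ∈ D̄ for all t ≥ 0; (ii) every solution with z(0) ∈ 𝐃 satisfies z(t) ∈ 𝐃 for all t ≥ 0; (iii) G(0) = 0, and if in addition B_f is irreducible, then every equilibrium belonging to D̄ but not to 𝐃 is equal to 0. -/
open Matrix Filter Topology MeasureTheory

noncomputable section

/-- `Z(z) = diag(z_1,…,z_n,0,…,0)`. -/
def Zmat (n : ℕ) {N : ℕ} (z : Fin N → ℝ) : Matrix (Fin N) (Fin N) ℝ :=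
  Matrix.diagonal fun i => if (i : ℕ) < n then z i else 0

/-- `H(z)_i = zᵀ B_{fi} z`. -/
def Hquad {N : ℕ} (Bfi : Fin N → Matrix (Fin N) (Fin N) ℝ) (z : Fin N → ℝ) : Fin N → ℝ :=
  fun i => z ⬝ᵥ (Bfi i).mulVec z

/-- The higher-order SIWS vector field `G(z) = -D_f z + (I - Z(z)) (B_f z + H(z))`. -/
def Gfield (n : ℕ) {N : ℕ} (Df Bf : Matrix (Fin N) (Fin N) ℝ)
    (Bfi : Fin N → Matrix (Fin N) (Fin N) ℝ) (z : Fin N → ℝ) : Fin N → ℝ :=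
  -(Df.mulVec z) + (1 - Zmat n z).mulVec (Bf.mulVec z + Hquad Bfi z)

/-- Upper bound vector: `1` on the first `n` coordinates, `w_{j,max}` on the rest. -/
def ubound (n : ℕ) {N : ℕ} (Df Bf : Matrix (Fin N) (Fin N) ℝ)
    (Bfi : Fin N → Matrix (Fin N) (Fin N) ℝ) (i : Fin N) : ℝ :=
  if (i : ℕ) < n then 1 else (∑ q, Bf i q + ∑ p, ∑ q, Bfi i p q) / Df i i

/-- The closed domain `D̄`. -/
def Dbar (n : ℕ) {N : ℕ} (Df Bf : Matrix (Fin N) (Fin N) ℝ)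
    (Bfi : Fin N → Matrix (Fin N) (Fin N) ℝ) : Set (Fin N → ℝ) :=
  {z | ∀ i, 0 ≤ z i ∧ z i ≤ ubound n Df Bf Bfi i}

/-- The open domain `𝐃`. -/
def Dint (n : ℕ) {N : ℕ} (Df Bf : Matrix (Fin N) (Fin N) ℝ)
    (Bfi : Fin N → Matrix (Fin N) (Fin N) ℝ) : Set (Fin N → ℝ) :=
  {z | ∀ i, 0 < z i ∧ z i < ubound n Df Bf Bfi i}

/-- A solution of `z' = G(z)` on `[0,∞)`. -/
def IsSolution {N : ℕ} (G : (Fin N → ℝ) → (Fin N → ℝ)) (z : ℝ → Fin N → ℝ) : Prop :=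
  ∀ t : ℝ, 0 ≤ t → HasDerivAt z (G (z t)) t

/-- Irreducibility of a (nonnegative) square matrix. -/
def Irred {N : ℕ} (M : Matrix (Fin N) (Fin N) ℝ) : Prop :=
  ∀ i j : Fin N, i ≠ j → ∃ (r : ℕ) (k : ℕ → Fin N),
    k 0 = i ∧ k r = j ∧ ∀ s, s < r → 0 < M (k s) (k (s + 1))

/-- Spectral radius: maximum modulus of the complex eigenvalues. -/
def specRad {N : ℕ} (M : Matrix (Fin N) (Fin N) ℝ) : ℝ :=
  sSup {r : ℝ | ∃ μ : ℂ, (M.map fun x : ℝ => (x : ℂ)).charpoly.IsRoot μ ∧ r = ‖μ‖}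

/-- Spectral abscissa: maximum real part of the complex eigenvalues. -/
def specAbs {N : ℕ} (M : Matrix (Fin N) (Fin N) ℝ) : ℝ :=
  sSup {r : ℝ | ∃ μ : ℂ, (M.map fun x : ℝ => (x : ℂ)).charpoly.IsRoot μ ∧ r = μ.re}

/-- A matrix is Hurwitz if every eigenvalue has negative real part. -/
def IsHurwitz {N : ℕ} (M : Matrix (Fin N) (Fin N) ℝ) : Prop :=
  ∀ μ : ℂ, (M.map fun x : ℝ => (x : ℂ)).charpoly.IsRoot μ → μ.re < 0

/-- Euclidean norm on `ℝ^N`. -/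
def eucNorm {N : ℕ} (v : Fin N → ℝ) : ℝ := Real.sqrt (∑ i, v i ^ 2)

/-- Euclidean norm on a pair of vectors (concatenation). -/
def eucNorm2 {N : ℕ} (v w : Fin N → ℝ) : ℝ := Real.sqrt (∑ i, v i ^ 2 + ∑ i, w i ^ 2)

/-- Jacobian matrix of a vector field at a point. -/
def jacobian {N : ℕ} (G : (Fin N → ℝ) → (Fin N → ℝ)) (z : Fin N → ℝ) :
    Matrix (Fin N) (Fin N) ℝ :=
  Matrix.of fun i j => fderiv ℝ G z (Pi.single j 1) i

/-- Structural hypotheses of the higher-order SIWS model. -/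
structure ModelHyp (n : ℕ) {N : ℕ} (Df Bf : Matrix (Fin N) (Fin N) ℝ)
    (Bfi : Fin N → Matrix (Fin N) (Fin N) ℝ) : Prop where
  dDiag : ∀ i j, i ≠ j → Df i j = 0
  dPos : ∀ i, 0 < Df i i
  bNonneg : ∀ p q, 0 ≤ Bf p q
  bBlock : ∀ p q : Fin N, n ≤ (p : ℕ) → n ≤ (q : ℕ) → Bf p q = 0
  bfiNonneg : ∀ i p q, 0 ≤ Bfi i p q
  bfiBlock1 : ∀ i : Fin N, (i : ℕ) < n → ∀ p q : Fin N, n ≤ (p : ℕ) → n ≤ (q : ℕ) →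
    Bfi i p q = 0
  bfiBlock2 : ∀ i : Fin N, n ≤ (i : ℕ) → ∀ p q : Fin N, ¬((p : ℕ) < n ∧ (q : ℕ) < n) →
    Bfi i p q = 0

/-- Bi-virus vector field for one virus:
`G^ν(z, zo) = -D_f^ν z + (I - Z(z) - Z(zo)) (B_f^ν z + H^ν(z))`. -/
def GBi (n : ℕ) {N : ℕ} (Df Bf : Matrix (Fin N) (Fin N) ℝ)
    (Bfi : Fin N → Matrix (Fin N) (Fin N) ℝ) (z zo : Fin N → ℝ) : Fin N → ℝ :=
  -(Df.mulVec z) + (1 - Zmat n z - Zmat n zo).mulVec (Bf.mulVec z + Hquad Bfi z)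

/-- A solution of the bi-virus dynamics on `[0,∞)`. -/
def IsSolutionBi (n : ℕ) {N : ℕ} (Df1 Bf1 : Matrix (Fin N) (Fin N) ℝ)
    (Bfi1 : Fin N → Matrix (Fin N) (Fin N) ℝ) (Df2 Bf2 : Matrix (Fin N) (Fin N) ℝ)
    (Bfi2 : Fin N → Matrix (Fin N) (Fin N) ℝ) (z1 z2 : ℝ → Fin N → ℝ) : Prop :=
  ∀ t : ℝ, 0 ≤ t →
    HasDerivAt z1 (GBi n Df1 Bf1 Bfi1 (z1 t) (z2 t)) t ∧
    HasDerivAt z2 (GBi n Df2 Bf2 Bfi2 (z2 t) (z1 t)) t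

/-- Membership in the bi-virus domain `D̄_bi`. -/
def InDbarBi (n : ℕ) {N : ℕ} (Df1 Bf1 : Matrix (Fin N) (Fin N) ℝ)
    (Bfi1 : Fin N → Matrix (Fin N) (Fin N) ℝ) (Df2 Bf2 : Matrix (Fin N) (Fin N) ℝ)
    (Bfi2 : Fin N → Matrix (Fin N) (Fin N) ℝ) (z1 z2 : Fin N → ℝ) : Prop :=
  z1 ∈ Dbar n Df1 Bf1 Bfi1 ∧ z2 ∈ Dbar n Df2 Bf2 Bfi2 ∧
    ∀ i : Fin N, (i : ℕ) < n → z1 i + z2 i ≤ 1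

/-- The vector `𝟙` : first `n` coordinates equal `1`, the rest `0`. -/
def onevec (n : ℕ) {N : ℕ} : Fin N → ℝ := fun i => if (i : ℕ) < n then 1 else 0

/-- The general SIWS vector field. -/
def Ggen (n : ℕ) {N : ℕ} (Df : Matrix (Fin N) (Fin N) ℝ)
    (F H : (Fin N → ℝ) → (Fin N → ℝ)) (z : Fin N → ℝ) : Fin N → ℝ := fun i =>
  if (i : ℕ) < n then -(Df i i * z i) + (1 - z i) * (F z i + H z i)
  else -(Df i i * z i) + (F z i + H z i)

/-- Upper bound vector for the general SIWS model. -/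
def uboundGen (n : ℕ) {N : ℕ} (Df : Matrix (Fin N) (Fin N) ℝ)
    (F H : (Fin N → ℝ) → (Fin N → ℝ)) (i : Fin N) : ℝ :=
  if (i : ℕ) < n then 1 else (F (onevec n) i + H (onevec n) i) / Df i i

def DbarGen (n : ℕ) {N : ℕ} (Df : Matrix (Fin N) (Fin N) ℝ)
    (F H : (Fin N → ℝ) → (Fin N → ℝ)) : Set (Fin N → ℝ) :=
  {z | ∀ i, 0 ≤ z i ∧ z i ≤ uboundGen n Df F H i}

def DintGen (n : ℕ) {N : ℕ} (Df : Matrix (Fin N) (Fin N) ℝ)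
    (F H : (Fin N → ℝ) → (Fin N → ℝ)) : Set (Fin N → ℝ) :=
  {z | ∀ i, 0 < z i ∧ z i < uboundGen n Df F H i}

/-- Structural hypotheses of the general SIWS model. -/
structure GenHyp (n : ℕ) {N : ℕ} (Df : Matrix (Fin N) (Fin N) ℝ)
    (F H : (Fin N → ℝ) → (Fin N → ℝ)) : Prop where
  dDiag : ∀ i j, i ≠ j → Df i j = 0
  dPos : ∀ i, 0 < Df i i
  fSmooth : ContDiff ℝ 1 F
  hSmooth : ContDiff ℝ 1 H
  fZero : F 0 = 0
  hZero : H 0 = 0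
  fDep : ∀ i : Fin N, n ≤ (i : ℕ) → ∀ z z' : Fin N → ℝ,
    (∀ j : Fin N, (j : ℕ) < n → z j = z' j) → F z i = F z' i
  hDep : ∀ i : Fin N, n ≤ (i : ℕ) → ∀ z z' : Fin N → ℝ,
    (∀ j : Fin N, (j : ℕ) < n → z j = z' j) → H z i = H z' i
  fMono : ∀ (z : Fin N → ℝ) (i j : Fin N), 0 ≤ fderiv ℝ F z (Pi.single j 1) i
  hMono : ∀ (z : Fin N → ℝ) (i j : Fin N), 0 ≤ fderiv ℝ H z (Pi.single j 1) i
  hJacZero : fderiv ℝ H 0 = 0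
  edgeHyp : ∃ E : Set (Fin N × Fin N),
    (∀ e ∈ E, e.1 ≠ e.2) ∧
    (∀ i j : Fin N, i ≠ j → ∃ (r : ℕ) (k : ℕ → Fin N),
      k 0 = i ∧ k r = j ∧ ∀ s, s < r → (k s, k (s + 1)) ∈ E) ∧
    (∀ (z : Fin N → ℝ), ∀ e ∈ E, 0 < fderiv ℝ F z (Pi.single e.2 1) e.1)

/-- The perturbed SIWS vector field `G_ε(z) = -D_f z + (I - Z(z)) (B_f z + ε H(z))`. -/
def Gpert (n : ℕ) {N : ℕ} (Df Bf : Matrix (Fin N) (Fin N) ℝ)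
    (H : (Fin N → ℝ) → (Fin N → ℝ)) (ε : ℝ) (z : Fin N → ℝ) : Fin N → ℝ :=
  -(Df.mulVec z) + (1 - Zmat n z).mulVec (Bf.mulVec z + ε • H z)

/-!
`D̄` is the box `[0, w]`, `w = ubound`, and `G` is `C¹`, hence Lipschitz on compact sets. The
invariance argument works for any box `[a, b]` and any locally Lipschitz field pointing inward on
its faces. Along a solution, the squared distance `φ` to the box satisfies `φ' ≤ K φ`: compare `G`
at `z` with `G` at the nearest point of the box. By Grönwall, `φ` stays `0`. Inside the box,
comparing `G` at `z` with `G` at the nearest point of a face gives `(z_i - a_i)' ≥ -L (z_i - a_i)`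
and `(b_i - z_i)' ≥ -L (b_i - z_i)`, so the distance to every face decays at most exponentially
and never vanishes.

An equilibrium in `D̄` cannot lie on an upper face: for `i ≤ n` the equation would force `d_i = 0`,
and for `i > n` irreducibility makes the bound `(B_f z + H z)_i ≤ d_i w_i` strict. So one of its
coordinates vanishes, and the equilibrium equation propagates zeros along the positive entries of
the irreducible matrix `B_f`.
-/

open Set

theorem le_mul_exp_of_hasDerivAt {f f' : ℝ → ℝ} {K a b : ℝ} (hab : a ≤ b)
    (hf : ∀ t ∈ Icc a b, HasDerivAt f (f' t) t) (bound : ∀ t ∈ Icc a b, f' t ≤ K * f t) :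
    f b ≤ f a * Real.exp (K * (b - a)) := by
  have h := le_gronwallBound_of_liminf_deriv_right_le (f := f) (f' := f') (δ := f a) (ε := 0)
    (fun t ht => (hf t ht).continuousAt.continuousWithinAt)
    (fun t ht _ hr => ((hf t (Ico_subset_Icc_self ht)).hasDerivWithinAt).liminf_right_slope_le hr)
    le_rfl (fun t ht => by simpa using bound t (Ico_subset_Icc_self ht)) b (right_mem_Icc.2 hab)
  rwa [gronwallBound_ε0] at h

theorem hasDerivAt_max_zero_sq (x : ℝ) :
    HasDerivAt (fun y : ℝ => max 0 y ^ 2) (2 * max 0 x) x := by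
  have off_zero : ∀ y ≠ (0 : ℝ), HasDerivAt (fun y : ℝ => max 0 y ^ 2) (2 * max 0 y) y := by
    intro y hy
    rcases hy.lt_or_gt with hy | hy
    · have h : (fun y : ℝ => max 0 y ^ 2) =ᶠ[𝓝 y] fun _ => 0 := by
        filter_upwards [eventually_lt_nhds hy] with w hw
        simp [max_eq_left hw.le]
      simpa [max_eq_left hy.le] using (hasDerivAt_const y (0 : ℝ)).congr_of_eventuallyEq h
    · have h : (fun y : ℝ => max 0 y ^ 2) =ᶠ[𝓝 y] fun y => y ^ 2 := by
        filter_upwards [eventually_gt_nhds hy] with w hw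
        simp [max_eq_right hw.le]
      simpa [max_eq_right hy.le] using (hasDerivAt_pow 2 y).congr_of_eventuallyEq h
  rcases eq_or_ne x 0 with rfl | hx
  · exact hasDerivAt_of_hasDerivAt_of_ne off_zero (by fun_prop) (by fun_prop)
  · exact off_zero x hx

section Clamp

variable {a b : ℝ}

theorem clamp_cases (hab : a ≤ b) (y : ℝ) :
    (y ≤ a ∧ max a (min b y) = a) ∨ (a ≤ y ∧ y ≤ b ∧ max a (min b y) = y) ∨
      (b ≤ y ∧ max a (min b y) = b) := by
  rcases le_total y a with hya | hay
  · exact Or.inl ⟨hya, by simp [min_eq_right (hya.trans hab), hya]⟩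
  rcases le_total y b with hyb | hby
  · exact Or.inr (Or.inl ⟨hay, hyb, by simp [hyb, hay]⟩)
  · exact Or.inr (Or.inr ⟨hby, by simp [hby, hab]⟩)

theorem sub_clamp_sq (hab : a ≤ b) (y : ℝ) :
    (y - max a (min b y)) ^ 2 = max 0 (a - y) ^ 2 + max 0 (y - b) ^ 2 := by
  rcases clamp_cases hab y with ⟨hy, h⟩ | ⟨hay, hyb, h⟩ | ⟨hy, h⟩ <;> rw [h]
  · rw [max_eq_right (by linarith), max_eq_left (by linarith)]; ring
  · rw [max_eq_left (by linarith), max_eq_left (by linarith)]; ring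
  · rw [max_eq_left (by linarith), max_eq_right (by linarith)]; ring

theorem hasDerivAt_sub_clamp_sq (hab : a ≤ b) (y : ℝ) :
    HasDerivAt (fun y => (y - max a (min b y)) ^ 2) (2 * (y - max a (min b y))) y := by
  have hlow := (hasDerivAt_max_zero_sq (a - y)).comp y ((hasDerivAt_id' y).const_sub a)
  have hup := (hasDerivAt_max_zero_sq (y - b)).comp y ((hasDerivAt_id' y).sub_const b)
  rw [funext (sub_clamp_sq hab)]
  refine (hlow.add hup).congr_deriv ?_
  rcases clamp_cases hab y with ⟨hy, h⟩ | ⟨hay, hyb, h⟩ | ⟨hy, h⟩ <;> rw [h]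
  · rw [max_eq_right (by linarith), max_eq_left (by linarith)]; ring
  · rw [max_eq_left (by linarith), max_eq_left (by linarith)]; ring
  · rw [max_eq_left (by linarith), max_eq_right (by linarith)]; ring

end Clamp

section Box

variable {ι : Type*} {a b x : ι → ℝ} {G : (ι → ℝ) → ι → ℝ}

def boxProj (a b x : ι → ℝ) : ι → ℝ := fun i => max (a i) (min (b i) (x i))

def PointsInward (G : (ι → ℝ) → ι → ℝ) (a b : ι → ℝ) : Prop :=
  ∀ x ∈ Icc a b, ∀ i, (x i = a i → 0 ≤ G x i) ∧ (x i = b i → G x i ≤ 0)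

theorem continuous_boxProj : Continuous (boxProj a b) := by
  unfold boxProj; fun_prop

theorem boxProj_mem (hab : a ≤ b) (x : ι → ℝ) : boxProj a b x ∈ Icc a b :=
  ⟨fun _ => le_max_left _ _, fun i => max_le (hab i) (min_le_left _ _)⟩

theorem boxProj_eq_self (hx : x ∈ Icc a b) : boxProj a b x = x :=
  funext fun i => by simp [boxProj, hx.1 i, hx.2 i]

theorem PointsInward.sub_boxProj_mul_le_zero (hin : PointsInward G a b) (hab : a ≤ b)
    (x : ι → ℝ) (i : ι) : (x i - boxProj a b x i) * G (boxProj a b x) i ≤ 0 := by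
  have hface := hin _ (boxProj_mem hab x) i
  rcases clamp_cases (hab i) (x i) with ⟨hx, h⟩ | ⟨-, -, h⟩ | ⟨hx, h⟩ <;>
    simp only [boxProj] at hface ⊢ <;> rw [h] at hface ⊢
  · exact mul_nonpos_of_nonpos_of_nonneg (by linarith) (hface.1 rfl)
  · simp
  · exact mul_nonpos_of_nonneg_of_nonpos (by linarith) (hface.2 rfl)

variable [Fintype ι]

def boxPenalty (a b x : ι → ℝ) : ℝ := ∑ i, (x i - boxProj a b x i) ^ 2

theorem boxPenalty_nonneg : 0 ≤ boxPenalty a b x :=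
  Finset.sum_nonneg fun _ _ => sq_nonneg _

theorem boxPenalty_eq_zero_iff (hab : a ≤ b) : boxPenalty a b x = 0 ↔ x ∈ Icc a b := by
  refine ⟨fun h => ?_, fun hx => by simp [boxPenalty, boxProj_eq_self hx]⟩
  have hx : x = boxProj a b x := funext fun i => by
    have := (Finset.sum_eq_zero_iff_of_nonneg fun i _ => sq_nonneg (x i - boxProj a b x i)).1 h i
      (Finset.mem_univ i)
    linarith [pow_eq_zero_iff two_ne_zero |>.1 this]
  exact hx ▸ boxProj_mem hab x

theorem HasDerivAt.boxPenalty (hab : a ≤ b) {z : ℝ → ι → ℝ} {z' : ι → ℝ} {t : ℝ}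
    (hz : HasDerivAt z z' t) :
    HasDerivAt (fun t => boxPenalty a b (z t))
      (2 * ∑ i, (z t i - boxProj a b (z t) i) * z' i) t := by
  rw [Finset.mul_sum]
  refine HasDerivAt.fun_sum fun i _ => ?_
  have h := (hasDerivAt_sub_clamp_sq (hab i) (z t i)).comp t (hasDerivAt_pi.1 hz i)
  exact h.congr_deriv (by rw [boxProj]; ring)

theorem dist_boxProj_sq_le (x : ι → ℝ) : dist x (boxProj a b x) ^ 2 ≤ boxPenalty a b x := by
  have h : dist x (boxProj a b x) ≤ √(boxPenalty a b x) :=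
    (dist_pi_le_iff (Real.sqrt_nonneg _)).2 fun i => Real.abs_le_sqrt <|
      Finset.single_le_sum (f := fun i => (x i - boxProj a b x i) ^ 2)
        (fun _ _ => sq_nonneg _) (Finset.mem_univ i)
  calc dist x (boxProj a b x) ^ 2 ≤ √(boxPenalty a b x) ^ 2 := by gcongr
    _ = boxPenalty a b x := Real.sq_sqrt boxPenalty_nonneg

theorem PointsInward.sum_sub_boxProj_mul_le (hin : PointsInward G a b) (hab : a ≤ b) {L : NNReal}
    (hL : dist (G x) (G (boxProj a b x)) ≤ L * dist x (boxProj a b x)) :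
    ∑ i, (x i - boxProj a b x i) * G x i ≤ Fintype.card ι * L * boxPenalty a b x := by
  set p := boxProj a b x
  set d := dist x p
  have hterm : ∀ i, (x i - p i) * G x i ≤ L * d ^ 2 := fun i => by
    have hx : |x i - p i| ≤ d := dist_le_pi_dist x p i
    have hG : |G x i - G p i| ≤ L * d := (dist_le_pi_dist (G x) (G p) i).trans hL
    calc (x i - p i) * G x i = (x i - p i) * G p i + (x i - p i) * (G x i - G p i) := by ring
      _ ≤ 0 + |x i - p i| * |G x i - G p i| := by
          rw [← abs_mul]
          exact add_le_add (hin.sub_boxProj_mul_le_zero hab x i) (le_abs_self _)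
      _ ≤ d * (L * d) := by rw [zero_add]; gcongr
      _ = L * d ^ 2 := by ring
  calc ∑ i, (x i - p i) * G x i ≤ ∑ _i : ι, L * d ^ 2 := Finset.sum_le_sum fun i _ => hterm i
    _ = Fintype.card ι * L * d ^ 2 := by simp [mul_assoc]
    _ ≤ Fintype.card ι * L * boxPenalty a b x := by gcongr; exact dist_boxProj_sq_le x

theorem PointsInward.apply_mem_Icc [DecidableEq ι] (hin : PointsInward G a b) {L : NNReal}
    (hL : LipschitzOnWith L G (Icc a b)) (hx : x ∈ Icc a b) (i : ι) :
    G x i ∈ Icc (-(L * (x i - a i))) (L * (b i - x i)) := by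
  have hupdate : ∀ c ∈ Icc (a i) (b i), Function.update x i c ∈ Icc a b := fun c hc => by
    constructor <;> intro j <;> rcases eq_or_ne j i with rfl | hj <;>
      simp [*, hc.1, hc.2, hx.1 j, hx.2 j]
  have hG : ∀ c ∈ Icc (a i) (b i), |G x i - G (Function.update x i c) i| ≤ L * |x i - c| :=
    fun c hc => (dist_le_pi_dist _ _ i).trans <| (hL.dist_le_mul _ hx _ (hupdate c hc)).trans <| by
      gcongr
      refine (dist_pi_le_iff (abs_nonneg _)).2 fun j => ?_
      rcases eq_or_ne j i with rfl | hj <;> simp [*, Real.dist_eq]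
  have hab := hx.1.trans hx.2
  have hlow := hG (a i) ⟨le_rfl, hab i⟩
  have hup := hG (b i) ⟨hab i, le_rfl⟩
  have hlow' := (hin _ (hupdate _ ⟨le_rfl, hab i⟩) i).1 (by simp)
  have hup' := (hin _ (hupdate _ ⟨hab i, le_rfl⟩) i).2 (by simp)
  rw [abs_of_nonneg (sub_nonneg.2 (hx.1 i))] at hlow
  rw [abs_of_nonpos (sub_nonpos.2 (hx.2 i))] at hup
  constructor <;> linarith [abs_le.1 hlow, abs_le.1 hup]

variable {z : ℝ → ι → ℝ}

theorem PointsInward.mem_Icc (hin : PointsInward G a b) (hG : LocallyLipschitz G)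
    (hz : ∀ t, 0 ≤ t → HasDerivAt z (G (z t)) t) (h0 : z 0 ∈ Icc a b) {T : ℝ} (hT : 0 ≤ T) :
    z T ∈ Icc a b := by
  have hab : a ≤ b := h0.1.trans h0.2
  have hzc : ContinuousOn z (Icc 0 T) := fun t ht => (hz t ht.1).continuousAt.continuousWithinAt
  obtain ⟨L, hL⟩ := hG.locallyLipschitzOn.exists_lipschitzOnWith_of_compact
    ((isCompact_Icc.image_of_continuousOn hzc).union
      (isCompact_Icc.image_of_continuousOn (continuous_boxProj.comp_continuousOn hzc)))
  have hφ : boxPenalty a b (z T) ≤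
      boxPenalty a b (z 0) * Real.exp (2 * (Fintype.card ι * L) * (T - 0)) := by
    refine le_mul_exp_of_hasDerivAt hT (fun t ht => (hz t ht.1).boxPenalty hab) fun t ht => ?_
    have hLt := hL.dist_le_mul _ (mem_union_left _ (mem_image_of_mem z ht))
      _ (mem_union_right _ (mem_image_of_mem (boxProj a b ∘ z) ht))
    rw [mul_assoc]
    gcongr
    exact hin.sum_sub_boxProj_mul_le hab hLt
  rw [(boxPenalty_eq_zero_iff hab).2 h0, zero_mul] at hφ
  exact (boxPenalty_eq_zero_iff hab).1 (le_antisymm hφ boxPenalty_nonneg)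

theorem PointsInward.mem_pi_Ioo (hin : PointsInward G a b) (hG : LocallyLipschitz G)
    (hz : ∀ t, 0 ≤ t → HasDerivAt z (G (z t)) t) (h0 : z 0 ∈ univ.pi fun i => Ioo (a i) (b i))
    {T : ℝ} (hT : 0 ≤ T) : z T ∈ univ.pi fun i => Ioo (a i) (b i) := by
  classical
  have hbox : ∀ t ∈ Icc 0 T, z t ∈ Icc a b := fun t ht =>
    hin.mem_Icc hG hz ⟨fun i => (h0 i trivial).1.le, fun i => (h0 i trivial).2.le⟩ ht.1
  obtain ⟨L, hL⟩ :=
    hG.locallyLipschitzOn.exists_lipschitzOnWith_of_compact (isCompact_Icc (a := a) (b := b))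
  intro i _
  have hzi : ∀ t ∈ Icc 0 T, HasDerivAt (fun t => z t i) (G (z t) i) t := fun t ht =>
    hasDerivAt_pi.1 (hz t ht.1) i
  have hexp := Real.exp_pos (-L * (T - 0))
  constructor
  · have h := le_mul_exp_of_hasDerivAt (f := fun t => a i - z t i) (K := -L) hT
      (fun t ht => (hzi t ht).const_sub _)
      fun t ht => by linarith [(hin.apply_mem_Icc hL (hbox t ht) i).1]
    nlinarith [(h0 i trivial).1]
  · have h := le_mul_exp_of_hasDerivAt (f := fun t => z t i - b i) (K := -L) hT
      (fun t ht => (hzi t ht).sub_const _)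
      fun t ht => by linarith [(hin.apply_mem_Icc hL (hbox t ht) i).2]
    nlinarith [(h0 i trivial).2]

end Box

section Irreducible

variable {N : ℕ} {M : Matrix (Fin N) (Fin N) ℝ}

theorem Irred.exists_pos (hM : Irred M) {i j : Fin N} (hij : i ≠ j) : ∃ k, 0 < M i k := by
  obtain ⟨r, k, hk0, hkr, hstep⟩ := hM i j hij
  have hr : r ≠ 0 := by rintro rfl; exact hij (hk0.symm.trans hkr)
  exact ⟨k 1, hk0 ▸ hstep 0 (Nat.pos_of_ne_zero hr)⟩

theorem Irred.forall_of_forall_pos_imp (hM : Irred M) {P : Fin N → Prop}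
    (hP : ∀ i j, P i → 0 < M i j → P j) {i : Fin N} (hi : P i) (j : Fin N) : P j := by
  rcases eq_or_ne i j with rfl | hij
  · exact hi
  obtain ⟨r, k, hk0, hkr, hstep⟩ := hM i j hij
  have hpath : ∀ s ≤ r, P (k s) := fun s => by
    induction s with
    | zero => exact fun _ => hk0 ▸ hi
    | succ s ih => exact fun hs => hP _ _ (ih (Nat.le_of_succ_le hs)) (hstep s hs)
  exact hkr ▸ hpath r le_rfl

end Irreducible

section Model

variable {n N : ℕ} {Df Bf : Matrix (Fin N) (Fin N) ℝ} {Bfi : Fin N → Matrix (Fin N) (Fin N) ℝ}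
  {z : Fin N → ℝ} {i : Fin N}

theorem one_sub_Zmat (z : Fin N → ℝ) :
    1 - Zmat n z = diagonal fun i : Fin N => 1 - if (i : ℕ) < n then z i else 0 := by
  rw [← diagonal_one, Zmat, diagonal_sub]

theorem contDiff_Gfield : ContDiff ℝ 1 (Gfield n Df Bf Bfi) := by
  refine contDiff_pi.2 fun i => ?_
  simp only [Gfield, one_sub_Zmat, Pi.add_apply, Pi.neg_apply, mulVec_diagonal]
  simp only [Hquad, mulVec, dotProduct]
  split_ifs <;> fun_prop

theorem Hquad_zero : Hquad Bfi 0 = 0 := by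
  ext i
  simp [Hquad]

theorem Gfield_zero : Gfield n Df Bf Bfi 0 = 0 := by
  simp [Gfield, Hquad_zero]

theorem Hquad_apply : Hquad Bfi z i = ∑ p, ∑ q, z p * Bfi i p q * z q := by
  simp [Hquad, dotProduct, mulVec, Finset.mul_sum, mul_assoc]

theorem ubound_of_lt (hi : (i : ℕ) < n) : ubound n Df Bf Bfi i = 1 := if_pos hi

theorem Dbar_eq_Icc : Dbar n Df Bf Bfi = Icc 0 (ubound n Df Bf Bfi) := by
  ext z
  simp [Dbar, Pi.le_def, forall_and]

theorem Dint_eq_pi : Dint n Df Bf Bfi = univ.pi fun i => Ioo 0 (ubound n Df Bf Bfi i) := by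
  ext z
  simp [Dint]

namespace ModelHyp

variable (hmod : ModelHyp n Df Bf Bfi)
include hmod

theorem mul_ubound (hi : n ≤ (i : ℕ)) :
    Df i i * ubound n Df Bf Bfi i = ∑ q, Bf i q + ∑ p, ∑ q, Bfi i p q := by
  rw [ubound, if_neg (not_lt.2 hi), mul_div_cancel₀ _ (hmod.dPos i).ne']

theorem Gfield_apply (z : Fin N → ℝ) (i : Fin N) :
    Gfield n Df Bf Bfi z i =
      -(Df i i * z i) + (1 - if (i : ℕ) < n then z i else 0) * (Bf *ᵥ z + Hquad Bfi z) i := by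
  have hD : Df = diagonal fun i => Df i i := by
    ext i j
    rcases eq_or_ne i j with rfl | hij
    · simp
    · simp [hij, hmod.dDiag i j hij]
  rw [Gfield, one_sub_Zmat, hD]
  simp [mulVec_diagonal]

theorem mulVec_nonneg (hz : 0 ≤ z) (i : Fin N) : 0 ≤ (Bf *ᵥ z) i := by
  rw [mulVec, dotProduct]
  exact Finset.sum_nonneg fun j _ => mul_nonneg (hmod.bNonneg i j) (hz j)

theorem Hquad_nonneg (hz : 0 ≤ z) (i : Fin N) : 0 ≤ Hquad Bfi z i := by
  rw [Hquad_apply]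
  exact Finset.sum_nonneg fun p _ => Finset.sum_nonneg fun q _ =>
    mul_nonneg (mul_nonneg (hz p) (hmod.bfiNonneg i p q)) (hz q)

theorem Bf_mul_le (hi : n ≤ (i : ℕ)) (hz1 : ∀ j : Fin N, (j : ℕ) < n → z j ≤ 1) (j : Fin N) :
    Bf i j * z j ≤ Bf i j := by
  rcases lt_or_ge (j : ℕ) n with hj | hj
  · exact mul_le_of_le_one_right (hmod.bNonneg i j) (hz1 j hj)
  · simp [hmod.bBlock i j hi hj]

theorem mulVec_le (hi : n ≤ (i : ℕ)) (hz1 : ∀ j : Fin N, (j : ℕ) < n → z j ≤ 1) :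
    (Bf *ᵥ z) i ≤ ∑ j, Bf i j := by
  rw [mulVec, dotProduct]
  exact Finset.sum_le_sum fun j _ => hmod.Bf_mul_le hi hz1 j

theorem mulVec_lt (hi : n ≤ (i : ℕ)) (hz1 : ∀ j : Fin N, (j : ℕ) < n → z j < 1)
    (hpos : ∃ j, 0 < Bf i j) : (Bf *ᵥ z) i < ∑ j, Bf i j := by
  obtain ⟨j, hj⟩ := hpos
  have hjn : (j : ℕ) < n := by
    by_contra! h
    exact hj.ne' (hmod.bBlock i j hi h)
  rw [mulVec, dotProduct]
  exact Finset.sum_lt_sum (fun j _ => hmod.Bf_mul_le hi (fun j h => (hz1 j h).le) j)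
    ⟨j, Finset.mem_univ j, mul_lt_of_lt_one_right hj (hz1 j hjn)⟩

theorem Hquad_le (hi : n ≤ (i : ℕ)) (hz0 : 0 ≤ z) (hz1 : ∀ j : Fin N, (j : ℕ) < n → z j ≤ 1) :
    Hquad Bfi z i ≤ ∑ p, ∑ q, Bfi i p q := by
  rw [Hquad_apply]
  refine Finset.sum_le_sum fun p _ => Finset.sum_le_sum fun q _ => ?_
  by_cases hpq : (p : ℕ) < n ∧ (q : ℕ) < n
  · have hB := hmod.bfiNonneg i p q
    calc z p * Bfi i p q * z q ≤ 1 * Bfi i p q * 1 := by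
          gcongr
          · exact hz0 q
          · exact hz1 p hpq.1
          · exact hz1 q hpq.2
      _ = Bfi i p q := by ring
  · simp [hmod.bfiBlock2 i hi p q hpq]

theorem pointsInward : PointsInward (Gfield n Df Bf Bfi) 0 (ubound n Df Bf Bfi) := by
  intro x hx i
  have hz1 : ∀ j : Fin N, (j : ℕ) < n → x j ≤ 1 := fun j hj => ubound_of_lt hj ▸ hx.2 j
  rw [hmod.Gfield_apply]
  constructor
  · intro hxi
    simp only [Pi.zero_apply] at hxi
    simp only [hxi, mul_zero, neg_zero, ite_self, sub_zero, one_mul, zero_add]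
    exact add_nonneg (hmod.mulVec_nonneg hx.1 i) (hmod.Hquad_nonneg hx.1 i)
  · intro hxi
    rcases lt_or_ge (i : ℕ) n with hi | hi
    · rw [if_pos hi, hxi, ubound_of_lt hi]
      nlinarith [hmod.dPos i]
    · rw [if_neg (not_lt.2 hi), sub_zero, one_mul, hxi, hmod.mul_ubound hi, Pi.add_apply]
      linarith [hmod.mulVec_le hi hz1, hmod.Hquad_le hi hx.1 hz1]

theorem equilibrium_apply (heq : Gfield n Df Bf Bfi z = 0) (i : Fin N) :
    Df i i * z i = (1 - if (i : ℕ) < n then z i else 0) * (Bf *ᵥ z + Hquad Bfi z) i := by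
  have h := congrFun heq i
  rw [hmod.Gfield_apply, Pi.zero_apply] at h
  linarith

theorem eq_zero_of_equilibrium_of_pos (hz : 0 ≤ z) (heq : Gfield n Df Bf Bfi z = 0)
    {i j : Fin N} (hzi : z i = 0) (hij : 0 < Bf i j) : z j = 0 := by
  have h := hmod.equilibrium_apply heq i
  simp only [hzi, mul_zero, ite_self, sub_zero, one_mul, Pi.add_apply] at h
  have hB : (Bf *ᵥ z) i = 0 := by linarith [hmod.mulVec_nonneg hz i, hmod.Hquad_nonneg hz i]
  rw [mulVec, dotProduct] at hB
  have hj := (Finset.sum_eq_zero_iff_of_nonneg fun k _ => mul_nonneg (hmod.bNonneg i k) (hz k)).1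
    hB j (Finset.mem_univ j)
  exact (mul_eq_zero.1 hj).resolve_left hij.ne'

theorem lt_ubound_of_equilibrium (hn : 0 < n) (hirr : Irred Bf)
    (hz : z ∈ Icc 0 (ubound n Df Bf Bfi)) (heq : Gfield n Df Bf Bfi z = 0) (i : Fin N) :
    z i < ubound n Df Bf Bfi i := by
  have hlt_one : ∀ j : Fin N, (j : ℕ) < n → z j < 1 := fun j hj => by
    refine lt_of_le_of_ne (ubound_of_lt hj ▸ hz.2 j) fun h1 => ?_
    have h := hmod.equilibrium_apply heq j
    rw [if_pos hj, h1, sub_self, zero_mul, mul_one] at h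
    exact (hmod.dPos j).ne' h
  rcases lt_or_ge (i : ℕ) n with hi | hi
  · exact ubound_of_lt hi ▸ hlt_one i hi
  refine lt_of_le_of_ne (hz.2 i) fun hzi => ?_
  have hpos : ∃ j, 0 < Bf i j :=
    hirr.exists_pos (j := ⟨0, by omega⟩) (Fin.ne_of_val_ne (by simp; omega))
  have h := hmod.equilibrium_apply heq i
  rw [if_neg (not_lt.2 hi), sub_zero, one_mul, hzi, hmod.mul_ubound hi, Pi.add_apply] at h
  linarith [hmod.mulVec_lt hi hlt_one hpos,
    hmod.Hquad_le hi hz.1 fun j hj => (hlt_one j hj).le]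

theorem eq_zero_of_equilibrium (hn : 0 < n) (hirr : Irred Bf)
    (hz : z ∈ Icc 0 (ubound n Df Bf Bfi))
    (hint : z ∉ univ.pi fun i => Ioo 0 (ubound n Df Bf Bfi i))
    (heq : Gfield n Df Bf Bfi z = 0) : z = 0 := by
  obtain ⟨i, hi⟩ : ∃ i, z i = 0 := by
    by_contra! h
    exact hint fun i _ => ⟨lt_of_le_of_ne (hz.1 i) (h i).symm,
      hmod.lt_ubound_of_equilibrium hn hirr hz heq i⟩
  exact funext <| hirr.forall_of_forall_pos_imp
    (fun _ _ hj hjk => hmod.eq_zero_of_equilibrium_of_pos hz.1 heq hj hjk) hi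

end ModelHyp

end Model

/-- general properties of the higher-order SIWS model:
(i) `D̄` is positively invariant; (ii) `𝐃` is positively invariant;
(iii) the origin is an equilibrium and (given irreducibility of `B_f`) the only
equilibrium on the boundary of `𝐃`. -/
theorem stmt0 (n m : ℕ) (hn : 0 < n)
    (Df Bf : Matrix (Fin (n + m)) (Fin (n + m)) ℝ)
    (Bfi : Fin (n + m) → Matrix (Fin (n + m)) (Fin (n + m)) ℝ)
    (hmod : ModelHyp n Df Bf Bfi) :
    (∀ z : ℝ → Fin (n + m) → ℝ, IsSolution (Gfield n Df Bf Bfi) z →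
        z 0 ∈ Dbar n Df Bf Bfi → ∀ t : ℝ, 0 ≤ t → z t ∈ Dbar n Df Bf Bfi) ∧
    (∀ z : ℝ → Fin (n + m) → ℝ, IsSolution (Gfield n Df Bf Bfi) z →
        z 0 ∈ Dint n Df Bf Bfi → ∀ t : ℝ, 0 ≤ t → z t ∈ Dint n Df Bf Bfi) ∧
    Gfield n Df Bf Bfi 0 = 0 ∧
    (Irred Bf → ∀ zs ∈ Dbar n Df Bf Bfi, zs ∉ Dint n Df Bf Bfi →
        Gfield n Df Bf Bfi zs = 0 → zs = 0) := by
  have hG : LocallyLipschitz (Gfield n Df Bf Bfi) := contDiff_Gfield.locallyLipschitz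
  rw [Dbar_eq_Icc, Dint_eq_pi]
  exact ⟨fun z hz h0 t ht => hmod.pointsInward.mem_Icc hG hz h0 ht,
    fun z hz h0 t ht => hmod.pointsInward.mem_pi_Ioo hG hz h0 ht,
    Gfield_zero,
    fun hirr z hz hint heq => hmod.eq_zero_of_equilibrium hn hirr hz hint heq⟩
end
end

section
/- Suppose B_f is irreducible and ρ(D_f⁻¹ B_f) > 1. Then the higher-order SIWS model has an equilibrium z* ∈ D̄ with z* ≫ 0 (every component strictly positive). -/
/-!
With `f(z) = B_f z + H(z)`, equilibria are the fixed points of the map `T` solving `G(z)_i = 0`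
for `z_i`, which is monotone on the nonnegative orthant. The moduli of a complex eigenvector of
`D_f⁻¹ B_f` for an eigenvalue of modulus `λ = ρ(D_f⁻¹ B_f) > 1` form a vector `u ≥ 0, u ≠ 0` with
`λ D_f u ≤ B_f u`; scaled to entries at most `1 - 1/λ` it satisfies `u ≤ T u`. Because of the block
structure of `B_f` and `B_{fi}`, `T` maps the box `0 ≤ z_i ≤ 1 (i ≤ n)` below the bound vector `w`
of `D̄`, so `u ≤ w` and `T w ≤ w`. Tarski's fixed-point theorem on the complete lattice `[u, w]`
gives an equilibrium `z ≥ u`, and irreducibility of `B_f` spreads positivity: a zero entry `z_p`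
forces `(B_f z)_p = 0`, hence `z_q = 0` whenever `(B_f)_{pq} > 0`.
-/

open Matrix Filter Topology MeasureTheory

noncomputable section

open Set in
theorem exists_isFixedPt_of_monotoneOn_Icc {α : Type*} [ConditionallyCompleteLattice α]
    {f : α → α} {a b : α} (hab : a ≤ b) (hf : MonotoneOn f (Icc a b))
    (ha : a ≤ f a) (hb : f b ≤ b) : ∃ x ∈ Icc a b, f x = x := by
  have : Fact (a ≤ b) := ⟨hab⟩
  have hmaps : ∀ x ∈ Icc a b, f x ∈ Icc a b := fun x hx =>
    ⟨ha.trans (hf (left_mem_Icc.2 hab) hx hx.1), (hf hx (right_mem_Icc.2 hab) hx.2).trans hb⟩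
  let g : Icc a b →o Icc a b := ⟨fun x => ⟨f x, hmaps x x.2⟩, fun x y hxy => hf x.2 y.2 hxy⟩
  exact ⟨g.lfp, g.lfp.2, congrArg Subtype.val g.map_lfp⟩

theorem Irred.forall_of_closed {N : ℕ} {M : Matrix (Fin N) (Fin N) ℝ} (hM : Irred M)
    {P : Fin N → Prop} (hP : ∀ p q, P p → 0 < M p q → P q) {i : Fin N} (hi : P i)
    (j : Fin N) : P j := by
  rcases eq_or_ne i j with rfl | hij
  · exact hi
  obtain ⟨r, k, hk0, hkr, hk⟩ := hM i j hij
  have hpath : ∀ s ≤ r, P (k s) := by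
    intro s
    induction s with
    | zero => exact fun _ => hk0 ▸ hi
    | succ s ih => exact fun hs => hP _ _ (ih (by omega)) (hk s (by omega))
  exact hkr ▸ hpath r le_rfl

theorem exists_eigenvector_of_specRad_ne_zero {N : ℕ} (M : Matrix (Fin N) (Fin N) ℝ)
    (h : specRad M ≠ 0) : ∃ (μ : ℂ) (v : Fin N → ℂ),
      ‖μ‖ = specRad M ∧ v ≠ 0 ∧ M.map (fun x : ℝ => (x : ℂ)) *ᵥ v = μ • v := by
  set Mc := M.map fun x : ℝ => (x : ℂ)
  have hfin : {r : ℝ | ∃ μ : ℂ, Mc.charpoly.IsRoot μ ∧ r = ‖μ‖}.Finite := by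
    convert (Polynomial.finite_setOfPred_isRoot Mc.charpoly_monic.ne_zero).image (‖·‖) using 1
    ext r
    simp [eq_comm]
  -- an empty set of moduli would have supremum `0`
  have hne : {r : ℝ | ∃ μ : ℂ, Mc.charpoly.IsRoot μ ∧ r = ‖μ‖}.Nonempty := by
    by_contra hempty
    exact h (by rw [specRad, Set.not_nonempty_iff_eq_empty.1 hempty, Real.sSup_empty])
  obtain ⟨μ, hroot, hμ⟩ := hne.csSup_mem hfin
  have hdet : (scalar (Fin N) μ - Mc).det = 0 := by
    rw [← eval_charpoly]; exact hroot
  obtain ⟨v, hv0, hv⟩ := exists_mulVec_eq_zero_iff.2 hdet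
  refine ⟨μ, v, hμ.symm, hv0, ?_⟩
  rw [sub_mulVec, sub_eq_zero] at hv
  ext i
  simp [← hv, mulVec_diagonal]

theorem norm_mul_norm_le_mulVec_norm {ι : Type*} [Fintype ι] {A : Matrix ι ι ℝ}
    (hA : ∀ i j, 0 ≤ A i j) {μ : ℂ} {v : ι → ℂ}
    (hv : A.map (fun x : ℝ => (x : ℂ)) *ᵥ v = μ • v) (i : ι) :
    ‖μ‖ * ‖v i‖ ≤ (A *ᵥ fun j => ‖v j‖) i :=
  calc ‖μ‖ * ‖v i‖ = ‖∑ j, (A i j : ℂ) * v j‖ := by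
        rw [← norm_mul, ← smul_eq_mul, ← Pi.smul_apply, ← hv]; rfl
    _ ≤ ∑ j, ‖(A i j : ℂ) * v j‖ := norm_sum_le _ _
    _ = (A *ᵥ fun j => ‖v j‖) i := by
        simp only [norm_mul, Complex.norm_real, Real.norm_of_nonneg (hA _ _)]; rfl

theorem Matrix.IsDiag.inv_eq_diagonal {ι K : Type*} [Fintype ι] [DecidableEq ι] [Field K]
    {D : Matrix ι ι K} (hD : D.IsDiag)
    (hpos : ∀ i, D i i ≠ 0) : D⁻¹ = diagonal fun i => (D i i)⁻¹ := by
  refine inv_eq_left_inv ?_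
  conv_lhs => rw [← hD.diagonal_diag]
  rw [diagonal_mul_diagonal]
  ext i j
  simp [one_apply, diagonal_apply, hpos]

def infectionRate {N : ℕ} (Bf : Matrix (Fin N) (Fin N) ℝ)
    (Bfi : Fin N → Matrix (Fin N) (Fin N) ℝ) (z : Fin N → ℝ) : Fin N → ℝ :=
  Bf *ᵥ z + Hquad Bfi z

/-- `G(z)_i = 0` solved for `z_i` with the infection rate held fixed. -/
def equilibriumMap (n : ℕ) {N : ℕ} (Df Bf : Matrix (Fin N) (Fin N) ℝ)
    (Bfi : Fin N → Matrix (Fin N) (Fin N) ℝ) (z : Fin N → ℝ) (i : Fin N) : ℝ :=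
  if (i : ℕ) < n then infectionRate Bf Bfi z i / (Df i i + infectionRate Bf Bfi z i)
  else infectionRate Bf Bfi z i / Df i i

section Model

variable {n N : ℕ} {Df Bf : Matrix (Fin N) (Fin N) ℝ} {Bfi : Fin N → Matrix (Fin N) (Fin N) ℝ}

theorem infectionRate_apply (z : Fin N → ℝ) (i : Fin N) :
    infectionRate Bf Bfi z i = ∑ q, Bf i q * z q + ∑ p, ∑ q, z p * Bfi i p q * z q := by
  simp [infectionRate, Hquad, mulVec, dotProduct, Finset.mul_sum, mul_assoc]

theorem Hquad_nonneg (hBfi : ∀ i p q, 0 ≤ Bfi i p q) {z : Fin N → ℝ} (hz : 0 ≤ z)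
    (i : Fin N) : 0 ≤ Hquad Bfi z i :=
  dotProduct_nonneg_of_nonneg hz fun p => dotProduct_nonneg_of_nonneg (hBfi i p) hz

theorem infectionRate_nonneg (h : ModelHyp n Df Bf Bfi) {z : Fin N → ℝ} (hz : 0 ≤ z) :
    0 ≤ infectionRate Bf Bfi z := fun i =>
  add_nonneg (dotProduct_nonneg_of_nonneg (h.bNonneg i) hz) (Hquad_nonneg h.bfiNonneg hz i)

theorem infectionRate_monotoneOn (h : ModelHyp n Df Bf Bfi) :
    MonotoneOn (infectionRate Bf Bfi) (Set.Ici 0) := by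
  intro z hz z' hz' hzz i
  rw [infectionRate_apply, infectionRate_apply]
  exact add_le_add
    (Finset.sum_le_sum fun q _ => mul_le_mul_of_nonneg_left (hzz q) (h.bNonneg i q))
    (Finset.sum_le_sum fun p _ => Finset.sum_le_sum fun q _ =>
      mul_le_mul (mul_le_mul_of_nonneg_right (hzz p) (h.bfiNonneg i p q)) (hzz q) (hz q)
        (mul_nonneg (hz' p) (h.bfiNonneg i p q)))

theorem Gfield_apply (hD : Df.IsDiag) (z : Fin N → ℝ) (i : Fin N) :
    Gfield n Df Bf Bfi z i =
      -(Df i i * z i) + (1 - if (i : ℕ) < n then z i else 0) * infectionRate Bf Bfi z i := by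
  rw [← hD.diagonal_diag]
  simp only [Gfield, Zmat, infectionRate, Pi.add_apply, Pi.neg_apply, sub_mulVec,
    one_mulVec, Pi.sub_apply, mulVec_diagonal, diag_apply, diagonal_apply_eq]
  ring

theorem Gfield_eq_zero_of_isFixedPt (h : ModelHyp n Df Bf Bfi) {z : Fin N → ℝ} (hz : 0 ≤ z)
    (hfix : equilibriumMap n Df Bf Bfi z = z) : Gfield n Df Bf Bfi z = 0 := by
  funext i
  have hf : 0 ≤ infectionRate Bf Bfi z i := infectionRate_nonneg h hz i
  have hDi := h.dPos i
  have hzi := congrFun hfix i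
  rw [Gfield_apply h.dDiag, Pi.zero_apply]
  unfold equilibriumMap at hzi
  split_ifs at hzi ⊢
  · rw [div_eq_iff (by positivity)] at hzi
    linear_combination hzi
  · rw [div_eq_iff hDi.ne'] at hzi
    linear_combination hzi

theorem equilibriumMap_monotoneOn (h : ModelHyp n Df Bf Bfi) :
    MonotoneOn (equilibriumMap n Df Bf Bfi) (Set.Ici 0) := by
  intro z hz z' hz' hzz i
  have hf : 0 ≤ infectionRate Bf Bfi z i := infectionRate_nonneg h hz i
  have hff := infectionRate_monotoneOn h hz hz' hzz i
  have hDi := h.dPos i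
  unfold equilibriumMap
  split_ifs
  · rw [div_le_div_iff₀ (by positivity) (by linarith)]
    nlinarith
  · gcongr

theorem equilibriumMap_le_ubound (h : ModelHyp n Df Bf Bfi) {z : Fin N → ℝ} (hz : 0 ≤ z)
    (hz1 : ∀ j : Fin N, (j : ℕ) < n → z j ≤ 1) :
    equilibriumMap n Df Bf Bfi z ≤ ubound n Df Bf Bfi := by
  intro i
  have hf : 0 ≤ infectionRate Bf Bfi z i := infectionRate_nonneg h hz i
  have hDi := h.dPos i
  unfold equilibriumMap ubound
  split_ifs with hi
  · rw [div_le_one (by positivity)]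
    linarith
  · gcongr
    rw [infectionRate_apply]
    push Not at hi
    gcongr with q _ p _ q _
    · by_cases hq : (q : ℕ) < n
      · exact mul_le_of_le_one_right (h.bNonneg i q) (hz1 q hq)
      · simp [h.bBlock i q hi (not_lt.1 hq)]
    · by_cases hpq : (p : ℕ) < n ∧ (q : ℕ) < n
      · calc z p * Bfi i p q * z q ≤ 1 * Bfi i p q * 1 :=
              mul_le_mul (mul_le_mul_of_nonneg_right (hz1 p hpq.1) (h.bfiNonneg i p q))
                (hz1 q hpq.2) (hz q) (by simpa using h.bfiNonneg i p q)
          _ = Bfi i p q := by ring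
      · simp [h.bfiBlock2 i hi p q hpq]

theorem le_equilibriumMap (h : ModelHyp n Df Bf Bfi) {lam : ℝ} {u : Fin N → ℝ}
    (hlam : 1 ≤ lam) (hu : 0 ≤ u) (hBu : ∀ i, lam * (Df i i * u i) ≤ (Bf *ᵥ u) i)
    (hu1 : ∀ i, 1 ≤ lam * (1 - u i)) : u ≤ equilibriumMap n Df Bf Bfi u := by
  intro i
  have hDu : 0 ≤ Df i i * u i := mul_nonneg (h.dPos i).le (hu i)
  have hf : lam * (Df i i * u i) ≤ infectionRate Bf Bfi u i :=
    (hBu i).trans (le_add_of_nonneg_right (Hquad_nonneg h.bfiNonneg hu i))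
  have hDi := h.dPos i
  have hui := hu1 i
  unfold equilibriumMap
  split_ifs
  · have h1u : 0 ≤ 1 - u i := by nlinarith
    rw [le_div_iff₀ (by nlinarith)]
    nlinarith [mul_le_mul_of_nonneg_left hf h1u, mul_le_mul_of_nonneg_right hui hDu]
  · rw [le_div_iff₀ hDi]
    nlinarith

theorem exists_subeigenvector (h : ModelHyp n Df Bf Bfi) (hrho : 1 < specRad (Df⁻¹ * Bf)) :
    ∃ lam : ℝ, 1 < lam ∧ ∃ u : Fin N → ℝ, 0 ≤ u ∧ u ≠ 0 ∧
      ∀ i, lam * (Df i i * u i) ≤ (Bf *ᵥ u) i := by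
  obtain ⟨μ, v, hμ, hv0, hv⟩ := exists_eigenvector_of_specRad_ne_zero _ (by linarith)
  have hinv := Matrix.IsDiag.inv_eq_diagonal h.dDiag fun i => (h.dPos i).ne'
  have hA : ∀ i j, 0 ≤ (Df⁻¹ * Bf) i j := fun i j => by
    rw [hinv, diagonal_mul]
    exact mul_nonneg (inv_nonneg.2 (h.dPos i).le) (h.bNonneg i j)
  refine ⟨‖μ‖, hμ ▸ hrho, fun j => ‖v j‖, fun j => norm_nonneg _, ?_, fun i => ?_⟩
  · obtain ⟨j, hj⟩ := Function.ne_iff.1 hv0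
    exact Function.ne_iff.2 ⟨j, norm_ne_zero_iff.2 hj⟩
  have key := norm_mul_norm_le_mulVec_norm hA hv i
  rw [hinv, ← mulVec_mulVec, mulVec_diagonal, le_inv_mul_iff₀ (h.dPos i)] at key
  linarith [mul_left_comm ‖μ‖ (Df i i) ‖v i‖]

theorem exists_subsolution (h : ModelHyp n Df Bf Bfi) (hrho : 1 < specRad (Df⁻¹ * Bf)) :
    ∃ lam : ℝ, 1 ≤ lam ∧ ∃ u : Fin N → ℝ, 0 ≤ u ∧ u ≠ 0 ∧
      (∀ i, lam * (Df i i * u i) ≤ (Bf *ᵥ u) i) ∧ ∀ i, 1 ≤ lam * (1 - u i) := by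
  obtain ⟨lam, hlam, u, hu, hu0, hBu⟩ := exists_subeigenvector h hrho
  have hnorm : 0 < ‖u‖ := norm_pos_iff.2 hu0
  have hgap : 0 < 1 - lam⁻¹ := sub_pos.2 (inv_lt_one_of_one_lt₀ hlam)
  set c := (1 - lam⁻¹) / ‖u‖
  have hc : 0 < c := div_pos hgap hnorm
  refine ⟨lam, hlam.le, c • u, smul_nonneg hc.le hu, smul_ne_zero hc.ne' hu0, fun i => ?_,
    fun i => ?_⟩
  · rw [mulVec_smul, Pi.smul_apply, Pi.smul_apply, smul_eq_mul, smul_eq_mul]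
    nlinarith [hBu i]
  · have hui : c * u i ≤ 1 - lam⁻¹ := by
      calc c * u i ≤ c * ‖u‖ := by
            gcongr
            exact (Real.le_norm_self _).trans (norm_le_pi_norm u i)
        _ = 1 - lam⁻¹ := div_mul_cancel₀ _ hnorm.ne'
    rw [Pi.smul_apply, smul_eq_mul]
    have : lam * lam⁻¹ = 1 := mul_inv_cancel₀ (by positivity)
    nlinarith

theorem pos_of_Gfield_eq_zero (h : ModelHyp n Df Bf Bfi) (hirr : Irred Bf) {z : Fin N → ℝ}
    (hz : 0 ≤ z) (hz0 : z ≠ 0) (hG : Gfield n Df Bf Bfi z = 0) (i : Fin N) : 0 < z i := by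
  have hclosed : ∀ p q, z p = 0 → 0 < Bf p q → z q = 0 := by
    intro p q hp hpq
    have hf : infectionRate Bf Bfi z p = 0 := by
      simpa [hp] using (Gfield_apply h.dDiag z p).symm.trans (congrFun hG p)
    have hBz : ∑ q, Bf p q * z q = 0 := by
      have hBz0 : 0 ≤ (Bf *ᵥ z) p := dotProduct_nonneg_of_nonneg (h.bNonneg p) hz
      rw [infectionRate, Pi.add_apply] at hf
      exact le_antisymm (by linarith [Hquad_nonneg h.bfiNonneg hz p] : (Bf *ᵥ z) p ≤ 0) hBz0
    have hterm := (Finset.sum_eq_zero_iff_of_nonneg fun q _ =>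
      mul_nonneg (h.bNonneg p q) (hz q)).1 hBz q (Finset.mem_univ q)
    exact (mul_eq_zero.1 hterm).resolve_left hpq.ne'
  obtain ⟨j, hj⟩ := Function.ne_iff.1 hz0
  exact (hz i).lt_of_ne' fun hi => hj (hirr.forall_of_closed hclosed hi j)

end Model

theorem stmt6_general (n m : ℕ)
    (Df Bf : Matrix (Fin (n + m)) (Fin (n + m)) ℝ)
    (Bfi : Fin (n + m) → Matrix (Fin (n + m)) (Fin (n + m)) ℝ)
    (hmod : ModelHyp n Df Bf Bfi) (hirr : Irred Bf)
    (hrho : 1 < specRad (Df⁻¹ * Bf)) :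
    ∃ zs ∈ Dbar n Df Bf Bfi, Gfield n Df Bf Bfi zs = 0 ∧ ∀ i, 0 < zs i := by
  obtain ⟨lam, hlam, u, hu, hu0, hBu, hu1⟩ := exists_subsolution hmod hrho
  have hsub : u ≤ equilibriumMap n Df Bf Bfi u := le_equilibriumMap hmod hlam hu hBu hu1
  have hu_le_one : ∀ j, u j ≤ 1 := fun j => by nlinarith [hu1 j]
  have huw : u ≤ ubound n Df Bf Bfi :=
    hsub.trans (equilibriumMap_le_ubound hmod hu fun j _ => hu_le_one j)
  have hTw : equilibriumMap n Df Bf Bfi (ubound n Df Bf Bfi) ≤ ubound n Df Bf Bfi :=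
    equilibriumMap_le_ubound hmod (hu.trans huw) fun j hj => by simp [ubound, hj]
  obtain ⟨z, ⟨huz, hzw⟩, hfix⟩ := exists_isFixedPt_of_monotoneOn_Icc huw
    ((equilibriumMap_monotoneOn hmod).mono fun x hx => hu.trans hx.1) hsub hTw
  have hz : 0 ≤ z := hu.trans huz
  have hG := Gfield_eq_zero_of_isFixedPt hmod hz hfix
  have hz0 : z ≠ 0 := fun hz0 => hu0 (le_antisymm (hz0 ▸ huz) hu)
  exact ⟨z, fun i => ⟨hz i, hzw i⟩, hG, pos_of_Gfield_eq_zero hmod hirr hz hz0 hG⟩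

/-- if `ρ(D_f⁻¹ B_f) > 1` there exists a strictly positive endemic
equilibrium. -/
theorem stmt6 (n m : ℕ) (hn : 0 < n)
    (Df Bf : Matrix (Fin (n + m)) (Fin (n + m)) ℝ)
    (Bfi : Fin (n + m) → Matrix (Fin (n + m)) (Fin (n + m)) ℝ)
    (hmod : ModelHyp n Df Bf Bfi) (hirr : Irred Bf)
    (hrho : 1 < specRad (Df⁻¹ * Bf)) :
    ∃ zs ∈ Dbar n Df Bf Bfi, Gfield n Df Bf Bfi zs = 0 ∧ ∀ i, 0 < zs i :=
  stmt6_general n m Df Bf Bfi hmod hirr hrho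
end
end
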